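/- arXiv:2501.03486 — 2 statements merged into one kernel-verified Lean document; each statement's English description precedes it below -/
import Mathlib

section
/- The suboptimality gap between the RLHF-optimal policy and the optimal-prompter policy satisfies J(π*) − J(π̃_{ρ*}) ≤ r_max·Σ_x P(x)·d_TV(π*(·|x), π_F(·|x)) + r_max·Σ_x P(x)·Σ_{x'} ρ_sft(x'|x)·d_TV(π_F(·|x), π_F(·|x')) − λ·Σ_x P(x)·KL(ρ*(·|x) ‖ ρ_sft(·|x)). -/
/-!
At a prompt `x`, split the gap as `(E_{π*(·|x)} r(x, ·) - R(x, x)) + (R(x, x) - E_{ρ*(·|x)} R(x, ·))`.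
Since rewards lie in `[0, r_max]`, the expected rewards of two response distributions differ by at most
`r_max` times their total variation distance; this bounds the first term and each `R(x, x) - R(x, x')`.
For the second term, `ρ*(·|x)` maximizes `E_ρ R(x, ·) - λ KL(ρ ‖ ρ_sft(·|x))`, with value `λ log Z(x)`,
which by Jensen is at least `E_{ρ_sft(·|x)} R(x, ·)`.
-/

open Finset Real

noncomputable section

variable {ι κ : Type*} [Fintype ι] [Fintype κ]

def tvDist (p q : ι → ℝ) : ℝ := 1 / 2 * ∑ i, |p i - q i|

def klDiv (p q : ι → ℝ) : ℝ := ∑ i, p i * log (p i / q i)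

def gibbs (lam : ℝ) (w f : ι → ℝ) (i : ι) : ℝ :=
  w i * exp (f i / lam) / ∑ j, w j * exp (f j / lam)

theorem sum_sub_mul_le_mul_tvDist {p q f : ι → ℝ} {M : ℝ} (hpq : ∑ i, p i = ∑ i, q i)
    (hf0 : ∀ i, 0 ≤ f i) (hfM : ∀ i, f i ≤ M) :
    ∑ i, (p i - q i) * f i ≤ M * tvDist p q := by
  have hpointwise : ∀ i, (p i - q i) * f i ≤ (p i - q i)⁺ * M := fun i => by
    nth_rewrite 1 [← posPart_sub_negPart (p i - q i)]
    nlinarith [posPart_nonneg (p i - q i), negPart_nonneg (p i - q i), hf0 i, hfM i]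
  -- the positive and negative parts of `p - q` have equal mass, so each is half of `∑ |p - q|`
  have hmass : ∑ i, (p i - q i)⁺ = 1 / 2 * ∑ i, |p i - q i| := by
    have htwice : ∀ d : ℝ, 2 * d⁺ = d + |d| := fun d => by
      linarith [posPart_add_negPart d, posPart_sub_negPart d]
    have hsum : ∑ i, (p i - q i) = 0 := by rw [sum_sub_distrib, hpq, sub_self]
    have := sum_congr rfl fun i (_ : i ∈ univ) => htwice (p i - q i)
    simp only [← mul_sum, sum_add_distrib, hsum] at this
    linarith
  calc ∑ i, (p i - q i) * f i ≤ ∑ i, (p i - q i)⁺ * M := sum_le_sum fun i _ => hpointwise i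
    _ = M * tvDist p q := by rw [← sum_mul, hmass, tvDist, mul_comm]

theorem sum_mul_exp_pos {w : ι → ℝ} (hw0 : ∀ i, 0 ≤ w i) (hw1 : ∑ i, w i = 1) (g : ι → ℝ) :
    0 < ∑ i, w i * exp (g i) := by
  obtain ⟨i, -, hi⟩ := exists_lt_of_sum_lt (f := fun _ => (0 : ℝ)) (g := w) (s := univ)
    (by simp [hw1])
  exact sum_pos' (fun j _ => mul_nonneg (hw0 j) (exp_pos _).le)
    ⟨i, mem_univ i, mul_pos hi (exp_pos _)⟩

theorem sum_gibbs {w : ι → ℝ} (hw0 : ∀ i, 0 ≤ w i) (hw1 : ∑ i, w i = 1) (lam : ℝ) (f : ι → ℝ) :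
    ∑ i, gibbs lam w f i = 1 := by
  simp only [gibbs]
  rw [← sum_div, div_self (sum_mul_exp_pos hw0 hw1 _).ne']

theorem sum_gibbs_mul_sub_mul_klDiv {w : ι → ℝ} (hw0 : ∀ i, 0 < w i) (hw1 : ∑ i, w i = 1)
    {lam : ℝ} (hlam : lam ≠ 0) (f : ι → ℝ) :
    ∑ i, gibbs lam w f i * f i - lam * klDiv (gibbs lam w f) w
      = lam * log (∑ i, w i * exp (f i / lam)) := by
  set Z := ∑ i, w i * exp (f i / lam) with hZdef
  have hZ : 0 < Z := sum_mul_exp_pos (fun i => (hw0 i).le) hw1 _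
  have hlog : ∀ i, log (gibbs lam w f i / w i) = f i / lam - log Z := fun i => by
    have hratio : gibbs lam w f i / w i = exp (f i / lam) / Z := by
      rw [gibbs, ← hZdef]
      field_simp [(hw0 i).ne']
    rw [hratio, log_div (exp_pos _).ne' hZ.ne', log_exp]
  have hsum := sum_gibbs (fun i => (hw0 i).le) hw1 lam f
  simp only [klDiv, hlog, mul_sub, sum_sub_distrib, ← sum_mul, hsum, mul_sum]
  field_simp
  ring

theorem sum_mul_le_mul_log_sum_mul_exp {w : ι → ℝ} (hw0 : ∀ i, 0 ≤ w i) (hw1 : ∑ i, w i = 1)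
    {lam : ℝ} (hlam : 0 < lam) (f : ι → ℝ) :
    ∑ i, w i * f i ≤ lam * log (∑ i, w i * exp (f i / lam)) := by
  have hjensen := convexOn_exp.map_sum_le (t := univ) (w := w) (p := fun i => f i / lam)
    (fun i _ => hw0 i) hw1 (fun i _ => Set.mem_univ _)
  simp only [smul_eq_mul] at hjensen
  rw [← div_le_iff₀' hlam, sum_div, ← exp_le_exp, exp_log (sum_mul_exp_pos hw0 hw1 _)]
  simpa only [mul_div_assoc] using hjensen

theorem sum_mul_le_sum_gibbs_mul_sub_mul_klDiv {w : ι → ℝ} (hw0 : ∀ i, 0 < w i)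
    (hw1 : ∑ i, w i = 1) {lam : ℝ} (hlam : 0 < lam) (f : ι → ℝ) :
    ∑ i, w i * f i ≤ ∑ i, gibbs lam w f i * f i - lam * klDiv (gibbs lam w f) w := by
  rw [sum_gibbs_mul_sub_mul_klDiv hw0 hw1 hlam.ne']
  exact sum_mul_le_mul_log_sum_mul_exp (fun i => (hw0 i).le) hw1 hlam f

theorem sum_sum_mul_mul (a : κ → ℝ) (p : κ → ι → ℝ) (f : ι → ℝ) :
    ∑ i, (∑ k, a k * p k i) * f i = ∑ k, a k * ∑ i, p k i * f i := by
  simp only [sum_mul, mul_sum, mul_assoc]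
  exact sum_comm

theorem sub_sum_gibbs_mul_le {piF : κ → ι → ℝ} (hpiF1 : ∀ k, ∑ i, piF k i = 1)
    {w : κ → ℝ} (hw0 : ∀ k, 0 < w k) (hw1 : ∑ k, w k = 1) {lam : ℝ} (hlam : 0 < lam)
    {q f : ι → ℝ} {M : ℝ} (hq1 : ∑ i, q i = 1) (hf0 : ∀ i, 0 ≤ f i) (hfM : ∀ i, f i ≤ M)
    {R : κ → ℝ} (hR : ∀ k, R k = ∑ i, piF k i * f i) (k₀ : κ) :
    ∑ i, q i * f i - ∑ k, gibbs lam w R k * R k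
      ≤ M * tvDist q (piF k₀) + M * ∑ k, w k * tvDist (piF k₀) (piF k)
        - lam * klDiv (gibbs lam w R) w := by
  have hresponse : ∑ i, q i * f i - R k₀ ≤ M * tvDist q (piF k₀) := by
    rw [hR, ← sum_sub_distrib]
    simp only [← sub_mul]
    exact sum_sub_mul_le_mul_tvDist (by rw [hq1, hpiF1]) hf0 hfM
  have hprompt : ∀ k, R k₀ - R k ≤ M * tvDist (piF k₀) (piF k) := fun k => by
    rw [hR, hR, ← sum_sub_distrib]
    simp only [← sub_mul]
    exact sum_sub_mul_le_mul_tvDist (by rw [hpiF1, hpiF1]) hf0 hfM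
  have hsft : R k₀ - ∑ k, w k * R k ≤ M * ∑ k, w k * tvDist (piF k₀) (piF k) :=
    calc R k₀ - ∑ k, w k * R k = ∑ k, w k * (R k₀ - R k) := by
          simp only [mul_sub, sum_sub_distrib, ← sum_mul, hw1, one_mul]
      _ ≤ ∑ k, w k * (M * tvDist (piF k₀) (piF k)) :=
          sum_le_sum fun k _ => mul_le_mul_of_nonneg_left (hprompt k) (hw0 k).le
      _ = M * ∑ k, w k * tvDist (piF k₀) (piF k) := by
          rw [mul_sum]
          exact sum_congr rfl fun k _ => mul_left_comm _ _ _
  linarith [sum_mul_le_sum_gibbs_mul_sub_mul_klDiv hw0 hw1 hlam R]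

end

theorem alignpro_suboptimality_bound_general
    {X Y : Type*} [Fintype X] [Fintype Y]
    (rmax : ℝ)
    (r : X → Y → ℝ) (hr : ∀ x y, 0 ≤ r x y ∧ r x y ≤ rmax)
    (piF : X → Y → ℝ) (hpiF0 : ∀ x y, 0 ≤ piF x y) (hpiF1 : ∀ x, ∑ y, piF x y = 1)
    (rhosft : X → X → ℝ) (hrho0 : ∀ x x', 0 < rhosft x x')
    (hrho1 : ∀ x, ∑ x', rhosft x x' = 1)
    (lam : ℝ) (hlam : 0 < lam) (beta : ℝ)
    (P : X → ℝ) (hP0 : ∀ x, 0 ≤ P x)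
    (R : X → X → ℝ) (hR : ∀ x x', R x x' = ∑ y, piF x' y * r x y)
    (Z : X → ℝ) (hZ : ∀ x, Z x = ∑ x', rhosft x x' * Real.exp (R x x' / lam))
    (rhostar : X → X → ℝ)
    (hrhostar : ∀ x x', rhostar x x' = rhosft x x' * Real.exp (R x x' / lam) / Z x)
    (Zstar : X → ℝ) (hZstar : ∀ x, Zstar x = ∑ y, piF x y * Real.exp (r x y / beta))
    (pistar : X → Y → ℝ)
    (hpistar : ∀ x y, pistar x y = piF x y * Real.exp (r x y / beta) / Zstar x)
    (pitil : X → Y → ℝ)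
    (hpitil : ∀ x y, pitil x y = ∑ x', rhostar x x' * piF x' y) :
    (∑ x, P x * ∑ y, pistar x y * r x y) - (∑ x, P x * ∑ y, pitil x y * r x y)
      ≤ rmax * ∑ x, P x * ((1 / 2) * ∑ y, |pistar x y - piF x y|)
        + rmax * ∑ x, P x * ∑ x', rhosft x x' * ((1 / 2) * ∑ y, |piF x y - piF x' y|)
        - lam * ∑ x, P x * ∑ x', rhostar x x' * Real.log (rhostar x x' / rhosft x x') := by
  have hpistar_eq : ∀ x, pistar x = gibbs beta (piF x) (r x) := fun x => funext fun y => by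
    rw [hpistar, hZstar, gibbs]
  have hrhostar_eq : ∀ x, rhostar x = gibbs lam (rhosft x) (R x) := fun x => funext fun x' => by
    rw [hrhostar, hZ, gibbs]
  have hpitil_reward : ∀ x, ∑ y, pitil x y * r x y = ∑ x', rhostar x x' * R x x' := fun x => by
    simp only [hpitil, sum_sum_mul_mul, hR]
  have hgap : ∀ x, ∑ y, pistar x y * r x y - ∑ y, pitil x y * r x y
      ≤ rmax * tvDist (pistar x) (piF x) + rmax * ∑ x', rhosft x x' * tvDist (piF x) (piF x')
        - lam * klDiv (rhostar x) (rhosft x) := fun x => by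
    rw [hpitil_reward, hrhostar_eq, hpistar_eq]
    exact sub_sum_gibbs_mul_le hpiF1 (hrho0 x) (hrho1 x) hlam (sum_gibbs (hpiF0 x) (hpiF1 x) _ _)
      (fun y => (hr x y).1) (fun y => (hr x y).2) (hR x) x
  calc _ = ∑ x, P x * (∑ y, pistar x y * r x y - ∑ y, pitil x y * r x y) := by
        simp only [mul_sub, sum_sub_distrib]
    _ ≤ ∑ x, P x * (rmax * tvDist (pistar x) (piF x)
          + rmax * ∑ x', rhosft x x' * tvDist (piF x) (piF x')
          - lam * klDiv (rhostar x) (rhosft x)) :=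
        sum_le_sum fun x _ => mul_le_mul_of_nonneg_left (hgap x) (hP0 x)
    _ = _ := by
        rw [mul_sum, mul_sum, mul_sum, ← sum_add_distrib, ← sum_sub_distrib]
        exact sum_congr rfl fun x _ => by simp only [tvDist, klDiv]; ring

/-- Suboptimality gap bound:
J(π*) − J(π̃_{ρ*}) ≤ r_max·E_x[d_TV(π*(·|x), π_F(·|x))]
 + r_max·E_x E_{x'∼ρ_sft}[d_TV(π_F(·|x), π_F(·|x'))]
 − λ·E_x[KL(ρ*(·|x) ‖ ρ_sft(·|x))]. -/
theorem alignpro_suboptimality_bound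
    {X Y : Type*} [Fintype X] [Fintype Y] [Nonempty X] [Nonempty Y]
    (rmax : ℝ)
    (r : X → Y → ℝ) (hr : ∀ x y, 0 ≤ r x y ∧ r x y ≤ rmax)
    (piF : X → Y → ℝ) (hpiF0 : ∀ x y, 0 ≤ piF x y) (hpiF1 : ∀ x, ∑ y, piF x y = 1)
    (rhosft : X → X → ℝ) (hrho0 : ∀ x x', 0 < rhosft x x')
    (hrho1 : ∀ x, ∑ x', rhosft x x' = 1)
    (lam : ℝ) (hlam : 0 < lam) (beta : ℝ) (hbeta : 0 < beta)
    (P : X → ℝ) (hP0 : ∀ x, 0 ≤ P x) (hP1 : ∑ x, P x = 1)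
    (R : X → X → ℝ) (hR : ∀ x x', R x x' = ∑ y, piF x' y * r x y)
    (Z : X → ℝ) (hZ : ∀ x, Z x = ∑ x', rhosft x x' * Real.exp (R x x' / lam))
    (rhostar : X → X → ℝ)
    (hrhostar : ∀ x x', rhostar x x' = rhosft x x' * Real.exp (R x x' / lam) / Z x)
    (Zstar : X → ℝ) (hZstar : ∀ x, Zstar x = ∑ y, piF x y * Real.exp (r x y / beta))
    (pistar : X → Y → ℝ)
    (hpistar : ∀ x y, pistar x y = piF x y * Real.exp (r x y / beta) / Zstar x)
    (pitil : X → Y → ℝ)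
    (hpitil : ∀ x y, pitil x y = ∑ x', rhostar x x' * piF x' y) :
    (∑ x, P x * ∑ y, pistar x y * r x y) - (∑ x, P x * ∑ y, pitil x y * r x y)
      ≤ rmax * ∑ x, P x * ((1 / 2) * ∑ y, |pistar x y - piF x y|)
        + rmax * ∑ x, P x * ∑ x', rhosft x x' * ((1 / 2) * ∑ y, |piF x y - piF x' y|)
        - lam * ∑ x, P x * ∑ x', rhostar x x' * Real.log (rhostar x x' / rhosft x x') :=
  alignpro_suboptimality_bound_general rmax r hr piF hpiF0 hpiF1 rhosft hrho0 hrho1 lam hlam beta P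
    hP0 R hR Z hZ rhostar hrhostar Zstar hZstar pistar hpistar pitil hpitil
end

section
/- For every prompt x ∈ X, the term Δ2*(x) = Σ_y π_F(y|x)·r(x,y) − Σ_y π̃_{ρ*}(y|x)·r(x,y) satisfies Δ2*(x) ≤ r_max·Σ_{x'} ρ_sft(x'|x)·d_TV(π_F(·|x), π_F(·|x')) − λ·KL(ρ*(·|x) ‖ ρ_sft(·|x)), where π̃_{ρ*}(y|x) = Σ_{x'} ρ*(x'|x)·π_F(y|x'). -/
/-!
Write `R x x'` for the expected reward of `π_F(·|x')` at prompt `x`. Averaging over `ρ_sft(·|x)`,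
`Δ2*(x) = Σ_{x'} ρ_sft (R x x - R x x') + (Σ_{x'} ρ_sft R x x' - Σ_{x'} ρ* R x x')`.
Each `R x x - R x x'` is the difference of the expectations of a `[0, r_max]`-valued function under
two pmfs, hence at most `r_max · d_TV`. For the Gibbs tilt `ρ*`, the KL divergence is explicit:
`λ·KL(ρ* ‖ ρ_sft) = Σ ρ* R - λ log Z`, while Jensen for `exp` gives `Σ ρ_sft R ≤ λ log Z`;
together they bound the second bracket by `-λ·KL(ρ* ‖ ρ_sft)`.
-/

open Finset Real

theorem sum_mul_sub_sum_mul_le_of_sum_eq {ι : Type*} [Fintype ι] {p q f : ι → ℝ} {M : ℝ}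
    (hf0 : ∀ i, 0 ≤ f i) (hfM : ∀ i, f i ≤ M) (hpq : ∑ i, p i = ∑ i, q i) :
    ∑ i, p i * f i - ∑ i, q i * f i ≤ M * (1 / 2 * ∑ i, |p i - q i|) := by
  have hpointwise : ∀ i ∈ univ, (p i - q i) * f i ≤ (p i - q i + |p i - q i|) / 2 * M := by
    intro i _
    rcases le_or_gt 0 (p i - q i) with h | h
    · rw [abs_of_nonneg h]; nlinarith [hf0 i, hfM i]
    · rw [abs_of_neg h]; nlinarith [hf0 i]
  have hsum_sub : ∑ i, (p i - q i) = 0 := by rw [sum_sub_distrib, hpq, sub_self]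
  calc ∑ i, p i * f i - ∑ i, q i * f i = ∑ i, (p i - q i) * f i := by
        simp only [sub_mul, sum_sub_distrib]
    _ ≤ ∑ i, (p i - q i + |p i - q i|) / 2 * M := sum_le_sum hpointwise
    _ = M * (1 / 2 * ∑ i, |p i - q i|) := by
        rw [← sum_mul, ← sum_div, sum_add_distrib, hsum_sub]; ring

theorem sum_mul_le_log_sum_mul_exp {ι : Type*} [Fintype ι] {w g : ι → ℝ}
    (hw0 : ∀ i, 0 ≤ w i) (hw1 : ∑ i, w i = 1) :
    ∑ i, w i * g i ≤ log (∑ i, w i * exp (g i)) := by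
  have hjensen : exp (∑ i, w i * g i) ≤ ∑ i, w i * exp (g i) := by
    simpa only [smul_eq_mul] using
      convexOn_exp.map_sum_le (fun i _ => hw0 i) hw1 fun i _ => Set.mem_univ (g i)
  simpa only [log_exp] using log_le_log (exp_pos _) hjensen

section GibbsTilt

variable {ι : Type*} [Fintype ι]

noncomputable def gibbsTilt (lam : ℝ) (w g : ι → ℝ) (i : ι) : ℝ :=
  w i * exp (g i / lam) / ∑ j, w j * exp (g j / lam)

variable {lam : ℝ} {w g : ι → ℝ}

theorem sum_mul_exp_div_pos [Nonempty ι] (hw : ∀ i, 0 < w i) :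
    0 < ∑ i, w i * exp (g i / lam) :=
  sum_pos (fun i _ => mul_pos (hw i) (exp_pos _)) univ_nonempty

theorem sum_gibbsTilt [Nonempty ι] (hw : ∀ i, 0 < w i) : ∑ i, gibbsTilt lam w g i = 1 := by
  simp only [gibbsTilt]
  rw [← sum_div, div_self (sum_mul_exp_div_pos hw).ne']

theorem mul_sum_gibbsTilt_mul_log_div [Nonempty ι] (hw : ∀ i, 0 < w i) (hlam : lam ≠ 0) :
    lam * ∑ i, gibbsTilt lam w g i * log (gibbsTilt lam w g i / w i)
      = ∑ i, gibbsTilt lam w g i * g i - lam * log (∑ i, w i * exp (g i / lam)) := by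
  set Z := ∑ i, w i * exp (g i / lam)
  have hZ : 0 < Z := sum_mul_exp_div_pos hw
  have hlog : ∀ i, log (gibbsTilt lam w g i / w i) = g i / lam - log Z := fun i => by
    rw [gibbsTilt, div_right_comm, mul_div_cancel_left₀ _ (hw i).ne',
      log_div (exp_pos _).ne' hZ.ne', log_exp]
  simp only [hlog, mul_sub, sum_sub_distrib, ← sum_mul, sum_gibbsTilt hw, mul_sum]
  congr 1
  · exact sum_congr rfl fun i _ => by field_simp
  · ring

theorem sum_mul_sub_sum_gibbsTilt_mul_le [Nonempty ι] (hw : ∀ i, 0 < w i)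
    (hw1 : ∑ i, w i = 1) (hlam : 0 < lam) :
    ∑ i, w i * g i - ∑ i, gibbsTilt lam w g i * g i
      ≤ -(lam * ∑ i, gibbsTilt lam w g i * log (gibbsTilt lam w g i / w i)) := by
  have hjensen : ∑ i, w i * g i ≤ lam * log (∑ i, w i * exp (g i / lam)) := by
    have := sum_mul_le_log_sum_mul_exp (g := fun i => g i / lam) (fun i => (hw i).le) hw1
    simp only [mul_div_assoc', ← sum_div, div_le_iff₀' hlam] at this
    exact this
  rw [mul_sum_gibbsTilt_mul_log_div hw hlam.ne']
  linarith

end GibbsTilt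

theorem delta2star_bound_general
    {X Y : Type*} [Fintype X] [Fintype Y]
    (rmax : ℝ)
    (r : X → Y → ℝ) (hr : ∀ x y, 0 ≤ r x y ∧ r x y ≤ rmax)
    (piF : X → Y → ℝ) (hpiF1 : ∀ x, ∑ y, piF x y = 1)
    (rhosft : X → X → ℝ) (hrho0 : ∀ x x', 0 < rhosft x x')
    (hrho1 : ∀ x, ∑ x', rhosft x x' = 1)
    (lam : ℝ) (hlam : 0 < lam)
    (R : X → X → ℝ) (hR : ∀ x x', R x x' = ∑ y, piF x' y * r x y)
    (Z : X → ℝ) (hZ : ∀ x, Z x = ∑ x', rhosft x x' * Real.exp (R x x' / lam))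
    (rhostar : X → X → ℝ)
    (hrhostar : ∀ x x', rhostar x x' = rhosft x x' * Real.exp (R x x' / lam) / Z x)
    (pitil : X → Y → ℝ)
    (hpitil : ∀ x y, pitil x y = ∑ x', rhostar x x' * piF x' y)
    (x : X) :
    ∑ y, piF x y * r x y - ∑ y, pitil x y * r x y
      ≤ rmax * ∑ x', rhosft x x' * ((1 / 2) * ∑ y, |piF x y - piF x' y|)
        - lam * ∑ x', rhostar x x' * Real.log (rhostar x x' / rhosft x x') := by
  have : Nonempty X := ⟨x⟩
  have hrhostar_eq : rhostar x = gibbsTilt lam (rhosft x) (R x) :=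
    funext fun x' => by rw [hrhostar, hZ, gibbsTilt]
  have hpitil_reward : ∑ y, pitil x y * r x y = ∑ x', rhostar x x' * R x x' := by
    simp only [hpitil, hR, sum_mul, mul_sum, mul_assoc]
    exact sum_comm
  have hsft_avg : ∑ x', rhosft x x' * (R x x - R x x') = R x x - ∑ x', rhosft x x' * R x x' := by
    simp only [mul_sub, sum_sub_distrib, ← sum_mul, hrho1, one_mul]
  have htv : ∑ x', rhosft x x' * (R x x - R x x')
      ≤ rmax * ∑ x', rhosft x x' * ((1 / 2) * ∑ y, |piF x y - piF x' y|) := by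
    rw [mul_sum]
    refine sum_le_sum fun x' _ => ?_
    rw [mul_left_comm]
    refine mul_le_mul_of_nonneg_left ?_ (hrho0 x x').le
    rw [hR, hR]
    exact sum_mul_sub_sum_mul_le_of_sum_eq (fun y => (hr x y).1) (fun y => (hr x y).2)
      (by rw [hpiF1, hpiF1])
  have hgibbs := sum_mul_sub_sum_gibbsTilt_mul_le (g := R x) (hrho0 x) (hrho1 x) hlam
  rw [← hR x x, hpitil_reward, hrhostar_eq]
  linarith

/-- For every x,
Δ2*(x) = Σ_y π_F(y|x)·r(x,y) − Σ_y π̃_{ρ*}(y|x)·r(x,y)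
       ≤ r_max·Σ_{x'} ρ_sft(x'|x)·d_TV(π_F(·|x), π_F(·|x'))
         − λ·KL(ρ*(·|x) ‖ ρ_sft(·|x)). -/
theorem delta2star_bound
    {X Y : Type*} [Fintype X] [Fintype Y] [Nonempty X] [Nonempty Y]
    (rmax : ℝ)
    (r : X → Y → ℝ) (hr : ∀ x y, 0 ≤ r x y ∧ r x y ≤ rmax)
    (piF : X → Y → ℝ) (hpiF0 : ∀ x y, 0 ≤ piF x y) (hpiF1 : ∀ x, ∑ y, piF x y = 1)
    (rhosft : X → X → ℝ) (hrho0 : ∀ x x', 0 < rhosft x x')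
    (hrho1 : ∀ x, ∑ x', rhosft x x' = 1)
    (lam : ℝ) (hlam : 0 < lam)
    (R : X → X → ℝ) (hR : ∀ x x', R x x' = ∑ y, piF x' y * r x y)
    (Z : X → ℝ) (hZ : ∀ x, Z x = ∑ x', rhosft x x' * Real.exp (R x x' / lam))
    (rhostar : X → X → ℝ)
    (hrhostar : ∀ x x', rhostar x x' = rhosft x x' * Real.exp (R x x' / lam) / Z x)
    (pitil : X → Y → ℝ)
    (hpitil : ∀ x y, pitil x y = ∑ x', rhostar x x' * piF x' y)
    (x : X) :
    ∑ y, piF x y * r x y - ∑ y, pitil x y * r x y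
      ≤ rmax * ∑ x', rhosft x x' * ((1 / 2) * ∑ y, |piF x y - piF x' y|)
        - lam * ∑ x', rhostar x x' * Real.log (rhostar x x' / rhosft x x') :=
  delta2star_bound_general rmax r hr piF hpiF1 rhosft hrho0 hrho1 lam hlam R hR Z hZ rhostar
    hrhostar pitil hpitil x
end
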